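/- Let I = I[x,y] and J = I[s,t] be interval persistence modules over ℤ with |y−x| < 2ε, |t−s| < 2ε, |x−s| ≤ ε, |y−t| ≤ ε. Then the following are equivalent: (1) s−ε ≤ x ≤ t−ε ≤ y or x−ε ≤ s ≤ y−ε ≤ t; (2) Hom(I[x,y], I[s,t]Λ_ε) ≠ 0 or Hom(I[s,t], I[x,y]Λ_ε) ≠ 0; (3) there exists a Λ_ε-interleaving (φ, ψ) between I[x,y] and I[s,t] with φ ≠ 0 or ψ ≠ 0. -/

import Mathlib

open CategoryTheory Classical

/-- The thin representation of a preorder `Q` with values `K` on a convex set `S`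
and `0` elsewhere, with identity internal maps on `S` (the interval representation
with support `S` when `S` is a connected convex set). -/
noncomputable def convMod (K : Type) [Field K] {Q : Type*} [Preorder Q] (S : Set Q)
    (hconv : ∀ ⦃a b c : Q⦄, a ≤ b → b ≤ c → a ∈ S → c ∈ S → b ∈ S) :
    Q ⥤ ModuleCat K where
  obj a := ModuleCat.of K (PLift (a ∈ S) → K)
  map {a b} _ := ModuleCat.ofHom
    { toFun := fun g _ => if h : a ∈ S then g ⟨h⟩ else 0
      map_add' := by
        intro g1 g2; funext s; by_cases h : a ∈ S
        · simp only [dif_pos h]; rfl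
        · simp only [dif_neg h]; exact (add_zero (0 : K)).symm
      map_smul' := by
        intro c g; funext s; by_cases h : a ∈ S
        · simp only [dif_pos h]; rfl
        · simp only [dif_neg h]; exact (smul_zero c).symm }
  map_id a := by
    apply ModuleCat.hom_ext; apply LinearMap.ext; intro g
    funext s
    change (if h : a ∈ S then g ⟨h⟩ else 0) = g s
    rw [dif_pos s.down]
  map_comp {a b c} f g := by
    apply ModuleCat.hom_ext; apply LinearMap.ext; intro v
    funext s
    change (if h : a ∈ S then v ⟨h⟩ else 0) =
      (if hb : b ∈ S then (if ha : a ∈ S then v ⟨ha⟩ else 0) else 0)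
    by_cases h : a ∈ S
    · rw [dif_pos h, dif_pos (hconv (leOfHom f) (leOfHom g) h s.down)]
    · rw [dif_neg h]
      by_cases hb : b ∈ S
      · rw [dif_pos hb]
      · rw [dif_neg hb]

/-- The interval persistence module `I[x,y] : ℤ ⥤ vect_K`. -/
noncomputable def intervalModule (K : Type) [Field K] (x y : ℤ) : ℤ ⥤ ModuleCat K :=
  convMod K (Set.Icc x y)
    (fun _ _ _ hab hbc ha hc => ⟨ha.1.trans hab, hbc.trans hc.2⟩)

/-- The `ε`-shift functor `Λ_ε : ℤ ⥤ ℤ`, `a ↦ a + ε`. -/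
noncomputable def shiftF (ε : ℕ) : ℤ ⥤ ℤ :=
  Monotone.functor (f := fun a : ℤ => a + ε) (fun _ _ h => add_le_add_left h _)

/-- A `Λ`-interleaving between representations `M, N : Q ⥤ D` of a proset `Q`,
given componentwise. -/
def IsInterleaving {Q : Type*} [Preorder Q] {D : Type*} [Category D] (Λ : Q → Q)
    (hmono : Monotone Λ) (hle : ∀ x, x ≤ Λ x) (M N : Q ⥤ D)
    (φ : ∀ x, M.obj x ⟶ N.obj (Λ x)) (ψ : ∀ x, N.obj x ⟶ M.obj (Λ x)) : Prop :=
  (∀ x y (h : x ≤ y), M.map (homOfLE h) ≫ φ y = φ x ≫ N.map (homOfLE (hmono h))) ∧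
  (∀ x y (h : x ≤ y), N.map (homOfLE h) ≫ ψ y = ψ x ≫ M.map (homOfLE (hmono h))) ∧
  (∀ x, φ x ≫ ψ (Λ x) = M.map (homOfLE ((hle x).trans (hle (Λ x))))) ∧
  (∀ x, ψ x ≫ φ (Λ x) = N.map (homOfLE ((hle x).trans (hle (Λ x)))))

/-! A morphism `I[x,y] ⟶ I[s,t]Λ_ε` can only be nonzero at a point `a` of `[x,y]` with
`a + ε ∈ [s,t]`, and naturality against the structure maps of the two intervals, which are
invertible inside each interval, forces `s ≤ x + ε ≤ t ≤ y + ε`; conversely under these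
inequalities the map that is the identity wherever both sides are `K` is natural. Since both
intervals are shorter than `2ε`, all their `2ε`-structure maps vanish, so any morphism
`I[x,y] ⟶ I[s,t]Λ_ε` together with the zero morphism back is already an interleaving. -/

section ConvMod

variable {K : Type} [Field K] {Q : Type*} [Preorder Q] {S : Set Q}
  {hS : ∀ ⦃a b c : Q⦄, a ≤ b → b ≤ c → a ∈ S → c ∈ S → b ∈ S}

lemma isZero_convMod_obj {a : Q} (ha : a ∉ S) : Limits.IsZero ((convMod K S hS).obj a) :=
  have : Subsingleton ((convMod K S hS).obj a) :=
    ⟨fun _ _ => funext fun p => absurd p.down ha⟩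
  ModuleCat.isZero_of_subsingleton _

lemma isIso_convMod_map {a b : Q} (f : a ⟶ b) (ha : a ∈ S) (hb : b ∈ S) :
    IsIso ((convMod K S hS).map f) := by
  rw [ConcreteCategory.isIso_iff_bijective]
  refine ⟨fun g₁ g₂ h => funext fun p => ?_, fun g => ⟨fun _ => g ⟨hb⟩, funext fun p => ?_⟩⟩
  · have h' : (if h : a ∈ S then g₁ ⟨h⟩ else 0) = if h : a ∈ S then g₂ ⟨h⟩ else 0 :=
      congrFun h ⟨hb⟩
    simpa only [dif_pos ha] using h'
  · change (if h : a ∈ S then g ⟨hb⟩ else 0) = g p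
    rw [dif_pos ha]

end ConvMod

lemma NatTrans.exists_app_ne_zero {C D : Type*} [Category C] [Category D]
    [Limits.HasZeroMorphisms D] {F G : C ⥤ D} {f : F ⟶ G} (hf : f ≠ 0) : ∃ a, f.app a ≠ 0 := by
  by_contra! h
  exact hf (NatTrans.ext (funext h))

section Interleaving

variable {Q : Type*} [Preorder Q] {D : Type*} [Category D] {Λ : Q → Q} {hmono : Monotone Λ}
  {hle : ∀ x, x ≤ Λ x} {M N : Q ⥤ D}

lemma IsInterleaving.symm {φ : ∀ x, M.obj x ⟶ N.obj (Λ x)} {ψ : ∀ x, N.obj x ⟶ M.obj (Λ x)}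
    (h : IsInterleaving Λ hmono hle M N φ ψ) : IsInterleaving Λ hmono hle N M ψ φ :=
  ⟨h.2.1, h.1, h.2.2.2, h.2.2.1⟩

def IsInterleaving.hom {φ : ∀ x, M.obj x ⟶ N.obj (Λ x)} {ψ : ∀ x, N.obj x ⟶ M.obj (Λ x)}
    (h : IsInterleaving Λ hmono hle M N φ ψ) : M ⟶ hmono.functor ⋙ N where
  app := φ
  naturality a b f := h.1 a b (leOfHom f)

lemma isInterleaving_of_map_eq_zero [Limits.HasZeroMorphisms D] (f : M ⟶ hmono.functor ⋙ N)
    (hM : ∀ x, M.map (homOfLE ((hle x).trans (hle (Λ x)))) = 0)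
    (hN : ∀ x, N.map (homOfLE ((hle x).trans (hle (Λ x)))) = 0) :
    IsInterleaving Λ hmono hle M N f.app (fun _ => 0) :=
  ⟨fun _ _ h => f.naturality (homOfLE h), fun _ _ _ => by simp,
    fun a => (hM a).symm ▸ Limits.comp_zero, fun a => (hN a).symm ▸ Limits.zero_comp⟩

end Interleaving

section Interval

variable {K : Type} [Field K] {ε : ℕ} {x y s t : ℤ}

lemma isZero_intervalModule_obj {a : ℤ} (ha : a ∉ Set.Icc x y) :
    Limits.IsZero ((intervalModule K x y).obj a) :=
  isZero_convMod_obj ha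

lemma intervalModule_map_eq_zero {a b : ℤ} (hab : a ≤ b) (h : y - x < b - a) :
    (intervalModule K x y).map (homOfLE hab) = 0 := by
  by_cases ha : a ∈ Set.Icc x y
  · refine (isZero_intervalModule_obj ?_).eq_of_tgt _ _
    rw [Set.mem_Icc] at ha ⊢
    omega
  · exact (isZero_intervalModule_obj ha).eq_of_src _ _

lemma intervalModule_map_eq_zero_of_abs_lt (h : |y - x| < 2 * (ε : ℤ)) (a : ℤ)
    (hle : a ≤ a + ε + ε) : (intervalModule K x y).map (homOfLE hle) = 0 :=
  intervalModule_map_eq_zero hle (by have := le_abs_self (y - x); omega)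

lemma mem_of_app_ne_zero {a : ℤ}
    {f : intervalModule K x y ⟶ shiftF ε ⋙ intervalModule K s t} (hf : f.app a ≠ 0) :
    a ∈ Set.Icc x y ∧ a + ε ∈ Set.Icc s t :=
  ⟨by_contra fun ha => hf ((isZero_intervalModule_obj ha).eq_of_src _ _),
    by_contra fun ha => hf ((isZero_intervalModule_obj ha).eq_of_tgt _ _)⟩

lemma isIso_intervalModule_map {a b : ℤ} (f : a ⟶ b) (ha : a ∈ Set.Icc x y)
    (hb : b ∈ Set.Icc x y) : IsIso ((intervalModule K x y).map f) :=
  isIso_convMod_map f ha hb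

variable (K) in
noncomputable def intervalShiftHom (hsx : s ≤ x + ε) (hty : t ≤ y + ε) :
    intervalModule K x y ⟶ shiftF ε ⋙ intervalModule K s t where
  app a := ModuleCat.ofHom
    { toFun g _ := if h : a ∈ Set.Icc x y then g ⟨h⟩ else 0
      map_add' g₁ g₂ := by funext; split_ifs <;> simp
      map_smul' c g := by funext; split_ifs <;> simp }
  naturality a b f := by
    by_cases ha : a ∈ Set.Icc x y
    · have hab := leOfHom f
      ext g
      funext ⟨hb⟩
      obtain ⟨hsb, hbt⟩ : s ≤ b + ε ∧ b + ε ≤ t := hb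
      have ⟨hxa, hay⟩ := ha
      have hb' : b ∈ Set.Icc x y := ⟨by omega, by omega⟩
      have haε : a + ε ∈ Set.Icc s t := ⟨by omega, by omega⟩
      exact ((dif_pos hb').trans (dif_pos ha)).trans ((dif_pos haε).trans (dif_pos ha)).symm
    · exact (isZero_intervalModule_obj ha).eq_of_src _ _

lemma intervalShiftHom_app_ne_zero (hsx : s ≤ x + ε) (hty : t ≤ y + ε) {a : ℤ}
    (ha : a ∈ Set.Icc x y) (haε : a + ε ∈ Set.Icc s t) :
    (intervalShiftHom K hsx hty).app a ≠ 0 := fun h => by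
  have h1 : (if h : a ∈ Set.Icc x y then (1 : K) else 0) = 0 :=
    congrFun (congrArg (fun f => f.hom fun _ => (1 : K)) h) ⟨haε⟩
  rw [dif_pos ha] at h1
  exact one_ne_zero h1

lemma bounds_of_app_ne_zero {f : intervalModule K x y ⟶ shiftF ε ⋙ intervalModule K s t} {a : ℤ}
    (hf : f.app a ≠ 0) : s ≤ x + ε ∧ x + ε ≤ t ∧ t ≤ y + ε := by
  obtain ⟨⟨hxa, hay⟩, hsa, hat⟩ := mem_of_app_ne_zero hf
  refine ⟨by_contra fun h => hf ?_, by omega, by_contra fun h => hf ?_⟩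
  · have hx : f.app x = 0 :=
      (isZero_intervalModule_obj (a := x + ε) (by rw [Set.mem_Icc]; omega)).eq_of_tgt _ _
    have := isIso_intervalModule_map (K := K) (homOfLE hxa) ⟨le_rfl, hxa.trans hay⟩ ⟨hxa, hay⟩
    have hnat := f.naturality (homOfLE hxa)
    rw [hx, Limits.zero_comp] at hnat
    exact (cancel_epi _).1 (hnat.trans Limits.comp_zero.symm)
  · have hab : a ≤ t - ε := by omega
    have hb : f.app (t - ε) = 0 :=
      (isZero_intervalModule_obj (by rw [Set.mem_Icc]; omega)).eq_of_src _ _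
    have : IsIso ((shiftF ε ⋙ intervalModule K s t).map (homOfLE hab)) :=
      isIso_intervalModule_map (K := K) (a := a + ε) (b := t - ε + ε) (homOfLE (by omega))
        ⟨hsa, hat⟩ (by rw [Set.mem_Icc]; omega)
    have hnat := f.naturality (homOfLE hab)
    rw [hb, Limits.comp_zero] at hnat
    exact (cancel_mono _).1 (hnat.symm.trans Limits.zero_comp.symm)

theorem exists_hom_intervalModule_shift_ne_zero_iff :
    (∃ f : intervalModule K x y ⟶ shiftF ε ⋙ intervalModule K s t, f ≠ 0) ↔
      s ≤ x + ε ∧ x + ε ≤ t ∧ t ≤ y + ε := by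
  refine ⟨fun ⟨f, hf⟩ => ?_, fun ⟨hsx, hxt, hty⟩ => ?_⟩
  · obtain ⟨a, ha⟩ := NatTrans.exists_app_ne_zero hf
    exact bounds_of_app_ne_zero ha
  · refine ⟨intervalShiftHom K hsx hty, fun h => ?_⟩
    refine intervalShiftHom_app_ne_zero hsx hty (a := t - ε) ?_ ?_ (by rw [h]; rfl)
    all_goals rw [Set.mem_Icc]; omega

end Interval

theorem interval_interleaving_tfae_general (K : Type) [Field K] (ε : ℕ) (x y s t : ℤ)
    (hshort1 : |y - x| < 2 * (ε : ℤ)) (hshort2 : |t - s| < 2 * (ε : ℤ)) :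
    (((s - ε ≤ x ∧ x ≤ t - ε ∧ t - ε ≤ y) ∨ (x - ε ≤ s ∧ s ≤ y - ε ∧ y - ε ≤ t)) ↔
      ((∃ f : intervalModule K x y ⟶ shiftF ε ⋙ intervalModule K s t, f ≠ 0) ∨
       (∃ g : intervalModule K s t ⟶ shiftF ε ⋙ intervalModule K x y, g ≠ 0))) ∧
    (((∃ f : intervalModule K x y ⟶ shiftF ε ⋙ intervalModule K s t, f ≠ 0) ∨
      (∃ g : intervalModule K s t ⟶ shiftF ε ⋙ intervalModule K x y, g ≠ 0)) ↔
      (∃ (φ : ∀ a : ℤ, (intervalModule K x y).obj a ⟶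
            (intervalModule K s t).obj (a + ε))
         (ψ : ∀ a : ℤ, (intervalModule K s t).obj a ⟶
            (intervalModule K x y).obj (a + ε)),
        IsInterleaving (fun a : ℤ => a + ε) (fun _ _ h => add_le_add_left h _)
          (fun a => le_add_of_nonneg_right (Int.natCast_nonneg ε))
          (intervalModule K x y) (intervalModule K s t) φ ψ ∧
        ((∃ a, φ a ≠ 0) ∨ (∃ a, ψ a ≠ 0)))) := by
  have hI := intervalModule_map_eq_zero_of_abs_lt (K := K) hshort1
  have hJ := intervalModule_map_eq_zero_of_abs_lt (K := K) hshort2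
  refine ⟨?_, ⟨?_, ?_⟩⟩
  · rw [exists_hom_intervalModule_shift_ne_zero_iff, exists_hom_intervalModule_shift_ne_zero_iff]
    omega
  · rintro (⟨f, hf⟩ | ⟨g, hg⟩)
    · exact ⟨f.app, fun _ => 0, isInterleaving_of_map_eq_zero f (hI · _) (hJ · _),
        Or.inl (NatTrans.exists_app_ne_zero hf)⟩
    · exact ⟨fun _ => 0, g.app, (isInterleaving_of_map_eq_zero g (hJ · _) (hI · _)).symm,
        Or.inr (NatTrans.exists_app_ne_zero hg)⟩
  · rintro ⟨φ, ψ, h, ⟨a, ha⟩ | ⟨a, ha⟩⟩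
    · exact Or.inl ⟨h.hom, fun h0 => ha (NatTrans.congr_app h0 a)⟩
    · exact Or.inr ⟨h.symm.hom, fun h0 => ha (NatTrans.congr_app h0 a)⟩

/-- For interval modules `I[x,y]`, `I[s,t]` over `ℤ` with
`|y−x| < 2ε`, `|t−s| < 2ε`, `|x−s| ≤ ε`, `|y−t| ≤ ε`, the following are
equivalent: (1) `s−ε ≤ x ≤ t−ε ≤ y` or `x−ε ≤ s ≤ y−ε ≤ t`;
(2) `Hom(I[x,y], I[s,t]Λ_ε) ≠ 0` or `Hom(I[s,t], I[x,y]Λ_ε) ≠ 0`;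
(3) there is a `Λ_ε`-interleaving `(φ, ψ)` between `I[x,y]` and `I[s,t]` with
`φ ≠ 0` or `ψ ≠ 0`. -/
theorem interval_interleaving_tfae (K : Type) [Field K] (ε : ℕ) (x y s t : ℤ)
    (hxy : x ≤ y) (hst : s ≤ t)
    (hshort1 : |y - x| < 2 * (ε : ℤ)) (hshort2 : |t - s| < 2 * (ε : ℤ))
    (hc1 : |x - s| ≤ (ε : ℤ)) (hc2 : |y - t| ≤ (ε : ℤ)) :
    (((s - ε ≤ x ∧ x ≤ t - ε ∧ t - ε ≤ y) ∨ (x - ε ≤ s ∧ s ≤ y - ε ∧ y - ε ≤ t)) ↔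
      ((∃ f : intervalModule K x y ⟶ shiftF ε ⋙ intervalModule K s t, f ≠ 0) ∨
       (∃ g : intervalModule K s t ⟶ shiftF ε ⋙ intervalModule K x y, g ≠ 0))) ∧
    (((∃ f : intervalModule K x y ⟶ shiftF ε ⋙ intervalModule K s t, f ≠ 0) ∨
      (∃ g : intervalModule K s t ⟶ shiftF ε ⋙ intervalModule K x y, g ≠ 0)) ↔
      (∃ (φ : ∀ a : ℤ, (intervalModule K x y).obj a ⟶
            (intervalModule K s t).obj (a + ε))
         (ψ : ∀ a : ℤ, (intervalModule K s t).obj a ⟶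
            (intervalModule K x y).obj (a + ε)),
        IsInterleaving (fun a : ℤ => a + ε) (fun _ _ h => add_le_add_left h _)
          (fun a => le_add_of_nonneg_right (Int.natCast_nonneg ε))
          (intervalModule K x y) (intervalModule K s t) φ ψ ∧
        ((∃ a, φ a ≠ 0) ∨ (∃ a, ψ a ≠ 0)))) :=
  interval_interleaving_tfae_general K ε x y s t hshort1 hshort2
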